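/- Let π be a two-stack sortable permutation of length n ≥ 1 and let D(π) = (π1, π2). Then each of π1 and π2 is either the empty permutation or a two-stack sortable permutation. -/

import Mathlib

namespace TSP

theorem foldr_max_mem {α : Type} [LinearOrder α] (x : α) (l : List α) :
    l.foldr max x ∈ x :: l := by
  induction l with
  | nil => simp
  | cons a t ih =>
    simp only [List.foldr_cons]
    rcases max_choice a (t.foldr max x) with h | h <;> rw [h]
    · simp
    · rcases List.mem_cons.mp ih with h' | h'
      · rw [h']; simp
      · exact List.mem_cons.mpr (Or.inr (List.mem_cons.mpr (Or.inr h')))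

theorem length_takeWhile_lt {α : Type} [DecidableEq α] {m : α} {l : List α}
    (h : m ∈ l) : (l.takeWhile (· ≠ m)).length < l.length := by
  have hd : l.dropWhile (· ≠ m) ≠ [] := by
    intro hnil
    have := List.dropWhile_eq_nil_iff.mp hnil m h
    simp at this
  have hsum : (l.takeWhile (· ≠ m)).length + (l.dropWhile (· ≠ m)).length = l.length := by
    rw [← List.length_append, List.takeWhile_append_dropWhile]
  have : 0 < (l.dropWhile (· ≠ m)).length := List.length_pos_iff.mpr hd
  omega

theorem length_tail_dropWhile_lt {α : Type} [DecidableEq α] {m : α} {l : List α}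
    (h : l ≠ []) : ((l.dropWhile (· ≠ m)).tail).length < l.length := by
  have hsum : (l.takeWhile (· ≠ m)).length + (l.dropWhile (· ≠ m)).length = l.length := by
    rw [← List.length_append, List.takeWhile_append_dropWhile]
  have h2 : ((l.dropWhile (· ≠ m)).tail).length = (l.dropWhile (· ≠ m)).length - 1 :=
    List.length_tail
  have : 0 < l.length := List.length_pos_iff.mpr h
  omega

/-- The stack-sorting operator `S`: `S(ε) = ε`, and if `A` is nonempty with
largest element `m` and `A = A_L · (m) · A_R`, then `S(A) = S(A_L) · S(A_R) · (m)`. -/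
def S {α : Type} [LinearOrder α] : List α → List α
  | [] => []
  | x :: l =>
    let m := l.foldr max x
    S ((x :: l).takeWhile (· ≠ m)) ++ S (((x :: l).dropWhile (· ≠ m)).tail) ++ [m]
termination_by l => l.length
decreasing_by
  · exact length_takeWhile_lt (by simpa [List.foldr_attach] using foldr_max_mem x l)
  · exact length_tail_dropWhile_lt (by simp)

/-- The identity permutation `id_n = (1, 2, …, n)` as a list. -/
def idPerm (n : ℕ) : List ℕ := List.range' 1 n

/-- `l` is a permutation of `{1, …, n}` (viewed as a sequence). -/
def IsPermOf (n : ℕ) (l : List ℕ) : Prop := l.Perm (idPerm n)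

/-- `l` is a two-stack sortable permutation (of `{1, …, len l}`). -/
def Is2SS (l : List ℕ) : Prop := IsPermOf l.length l ∧ S (S l) = idPerm l.length

/-- `σ^{+k}`: add `k` to every entry. -/
def shift (k : ℕ) (l : List ℕ) : List ℕ := l.map (· + k)

/-- `σ^{+(k1,m,k2)}`: add `k1` to every entry strictly smaller than `m`, `k2` to the others. -/
def shift3 (k1 m k2 : ℕ) (l : List ℕ) : List ℕ :=
  l.map (fun a => if a < m then a + k1 else a + k2)

/-- Standardization `P(A)`: the permutation of `{1,…,len A}` in the same relative order. -/
def stand (l : List ℕ) : List ℕ := l.map (fun a => (l.filter (fun b => b ≤ a)).length)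

/-- Avoidance of the pattern 231: no positions `i < j < k` with `l(k) < l(i) < l(j)`. -/
def Avoids231 (l : List ℕ) : Prop :=
  ¬ ∃ i j k, i < j ∧ j < k ∧ k < l.length ∧
      l.getD k 0 < l.getD i 0 ∧ l.getD i 0 < l.getD j 0

/-- The list of values of the left-to-right maxima of `l`, in order. -/
def lrMaxima (l : List ℕ) : List ℕ :=
  ((List.range l.length).filter
    (fun i => (l.take i).all (fun b => b < l.getD i 0))).map (fun i => l.getD i 0)

/-- `lmax`: the number of left-to-right maxima. -/
def lmax (l : List ℕ) : ℕ :=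
  (List.range l.length).countP (fun i => (l.take i).all (fun b => b < l.getD i 0))

/-- `rmax`: the number of right-to-left maxima. -/
def rmax (l : List ℕ) : ℕ :=
  (List.range l.length).countP (fun i => (l.drop (i+1)).all (fun b => b < l.getD i 0))

/-- `asc`: the number of ascents. -/
def asc (l : List ℕ) : ℕ :=
  (List.range (l.length - 1)).countP (fun i => l.getD i 0 < l.getD (i+1) 0)

/-- `des`: the number of descents. -/
def des (l : List ℕ) : ℕ :=
  (List.range (l.length - 1)).countP (fun i => l.getD (i+1) 0 < l.getD i 0)

/-- `slmax(π)`: the number of left-to-right maxima of `S(π)`. -/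
def slmax (l : List ℕ) : ℕ := lmax (S l)

/-- `sldes(π)`: the number of entries `a` that precede `a - 1` in `S(π)`. -/
def sldes (l : List ℕ) : ℕ :=
  (List.range (S l).length).countP
    (fun i => ((S l).drop (i+1)).any (fun b => b + 1 = (S l).getD i 0))

/-- The construction `C1(π1, π2) = π1 · (k+ℓ+1) · π2^{+k}`. -/
def C1 (p1 p2 : List ℕ) : List ℕ :=
  p1 ++ (p1.length + p2.length + 1) :: shift p1.length p2

/-- The `i`-th left-to-right maximum `a_i` of `S(π2)` (1-indexed). -/
def lrm (p2 : List ℕ) (i : ℕ) : ℕ := (lrMaxima (S p2)).getD (i - 1) 0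

/-- The construction `C2(π1, π2, i) = π1^{+(0,k,a_i)} · (k+ℓ+1) · π2^{+(k-1,a_i+1,k)}`. -/
def C2 (p1 p2 : List ℕ) (i : ℕ) : List ℕ :=
  shift3 0 p1.length (lrm p2 i) p1 ++
    (p1.length + p2.length + 1) :: shift3 (p1.length - 1) (lrm p2 i + 1) p1.length p2

/-- The decomposition `D(π) = (P(π_ℓ), P(π_r))`, where `π = π_ℓ · (n) · π_r`
with `n` the largest entry of `π`. -/
def D (l : List ℕ) : List ℕ × List ℕ :=
  match l with
  | [] => ([], [])
  | x :: t =>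
    let m := t.foldr max x
    (stand ((x :: t).takeWhile (· ≠ m)), stand (((x :: t).dropWhile (· ≠ m)).tail))

/-! Write `π = A · n · B` with `n` its maximum, so that `S(π) = S(A) · S(B) · n`. For any list `l`,
`S(l)` is sorted iff `l` avoids the pattern 231, and containing 231 passes from a subsequence to
the whole list. As `S(S(π))` is sorted, `S(π)` avoids 231, hence so do its factors `S(A)` and
`S(B)`, i.e. `S(S(A))` and `S(S(B))` are sorted. Standardization is an order-preserving
relabelling, which commutes with `S`; so `P(A)` and `P(B)` are two-stack sortable. -/

open List

section Stacksort

variable {α : Type} [LinearOrder α]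

theorem le_foldr_max (x : α) (l : List α) : ∀ a ∈ x :: l, a ≤ l.foldr max x := by
  induction l with
  | nil => simp
  | cons b t ih =>
    simp only [mem_cons, foldr_cons, forall_eq_or_imp, le_max_iff] at ih ⊢
    exact ⟨.inr ih.1, .inl le_rfl, fun a ha => .inr (ih.2 a ha)⟩

theorem takeWhile_append_cons_tail_dropWhile {m : α} {l : List α} (hm : m ∈ l) :
    l.takeWhile (· ≠ m) ++ m :: (l.dropWhile (· ≠ m)).tail = l := by
  have hne : l.dropWhile (· ≠ m) ≠ [] := fun h => by
    simpa using dropWhile_eq_nil_iff.mp h m hm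
  have hhead : (l.dropWhile (· ≠ m)).head hne = m := by
    simpa using head_dropWhile_not (fun a => decide (a ≠ m)) hne
  conv_rhs => rw [← takeWhile_append_dropWhile (p := fun a => decide (a ≠ m)) (l := l),
    ← cons_head_tail hne, hhead]

theorem notMem_takeWhile_ne (m : α) (l : List α) : m ∉ l.takeWhile (· ≠ m) :=
  fun h => by simpa using mem_takeWhile_imp h

theorem S_append_cons {A B : List α} {m : α} (hmA : m ∉ A) (hmax : ∀ a ∈ A ++ m :: B, a ≤ m) :
    S (A ++ m :: B) = S A ++ S B ++ [m] := by
  obtain ⟨x, t, hxt⟩ : ∃ x t, A ++ m :: B = x :: t := exists_cons_of_ne_nil (by simp)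
  have hfold : t.foldr max x = m :=
    le_antisymm (hmax _ (hxt ▸ foldr_max_mem x t)) (le_foldr_max x t m (hxt ▸ by simp))
  have hA : ∀ a ∈ A, decide (a ≠ m) = true := fun a ha => by
    simpa using ne_of_mem_of_not_mem ha hmA
  rw [hxt, S, ← hxt, hfold, takeWhile_append_of_pos hA, dropWhile_append_of_pos hA]
  simp

@[elab_as_elim]
theorem max_induction {motive : List α → Prop} (nil : motive [])
    (append_cons : ∀ A m B, m ∉ A → (∀ a ∈ A ++ m :: B, a ≤ m) →
      motive A → motive B → motive (A ++ m :: B))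
    (l : List α) : motive l := by
  induction h : l.length using Nat.strong_induction_on generalizing l with
  | _ n ih =>
    rcases l with _ | ⟨x, t⟩
    · exact nil
    have hm : t.foldr max x ∈ x :: t := foldr_max_mem x t
    obtain ⟨A, B, hsplit, hmA, hA, hB⟩ : ∃ A B, A ++ t.foldr max x :: B = x :: t ∧
        t.foldr max x ∉ A ∧ A.length < n ∧ B.length < n :=
      ⟨_, _, takeWhile_append_cons_tail_dropWhile hm, notMem_takeWhile_ne _ _,
        h ▸ length_takeWhile_lt hm, h ▸ length_tail_dropWhile_lt (cons_ne_nil x t)⟩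
    rw [← hsplit]
    exact append_cons A _ B hmA (hsplit ▸ le_foldr_max x t) (ih _ hA _ rfl) (ih _ hB _ rfl)

theorem S_nil : S ([] : List α) = [] := by
  rw [S]

theorem S_perm (l : List α) : S l ~ l := by
  induction l using max_induction with
  | nil => rw [S_nil]
  | append_cons A m B hmA hmax ihA ihB =>
    rw [S_append_cons hmA hmax]
    exact ((ihA.append ihB).append_right [m]).trans 
      (by simpa using (perm_append_singleton m B).append_left A)

theorem S_map {β : Type} [LinearOrder β] {f : α → β} (l : List α)
    (hf : StrictMonoOn f {a | a ∈ l}) : S (l.map f) = (S l).map f := by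
  induction l using max_induction with
  | nil => simp [S_nil]
  | append_cons A m B hmA hmax ihA ihB =>
    have hmem : m ∈ A ++ m :: B := by simp
    have hfmA : f m ∉ A.map f := by
      simp only [mem_map, not_exists, not_and]
      intro a ha hfa
      exact ne_of_mem_of_not_mem ha hmA (hf.injOn (by simp [ha]) hmem hfa)
    have hfmax : ∀ b ∈ A.map f ++ f m :: B.map f, b ≤ f m := by
      simp only [← map_cons, ← map_append, mem_map, forall_exists_index, and_imp,
        forall_apply_eq_imp_iff₂]
      exact fun a ha => (hf.le_iff_le ha hmem).mpr (hmax a ha)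
    rw [map_append, map_cons, S_append_cons hfmA hfmax, S_append_cons hmA hmax,
      ihA (hf.mono fun a ha => by simp_all), ihB (hf.mono fun a ha => by simp_all)]
    simp

def Contains231 (l : List α) : Prop := ∃ a b c, c < a ∧ a < b ∧ [a, b, c] <+ l

theorem Contains231.mono {l₁ l₂ : List α} (h : l₁ <+ l₂) : Contains231 l₁ → Contains231 l₂ :=
  fun ⟨a, b, c, hca, hab, hsub⟩ => ⟨a, b, c, hca, hab, hsub.trans h⟩

theorem contains231_append_cons {A B : List α} {m : α} (hmA : m ∉ A)
    (hmax : ∀ a ∈ A ++ m :: B, a ≤ m) :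
    Contains231 (A ++ m :: B) ↔ Contains231 A ∨ Contains231 B ∨ ∃ a ∈ A, ∃ c ∈ B, c < a := by
  constructor
  · rintro ⟨a, b, c, hca, hab, hsub⟩
    have ham : a ≤ m := hmax a (hsub.subset (by simp))
    have hbm : b ≤ m := hmax b (hsub.subset (by simp))
    have hcB : c ∈ m :: B → c ∈ B := fun hc => (mem_cons.mp hc).resolve_left (hca.trans_le ham).ne
    obtain ⟨l₁, l₂, hsplit, h₁, h₂⟩ := sublist_append_iff.mp hsub
    rcases l₁ with _ | ⟨x, _ | ⟨y, _ | ⟨z, _ | ⟨w, l₁⟩⟩⟩⟩ <;> simp only [nil_append, cons_append,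
      cons.injEq, reduceCtorEq, and_false] at hsplit
    · subst hsplit
      rcases sublist_cons_iff.mp h₂ with h₂ | ⟨r, hr, -⟩
      · exact .inr (.inl ⟨a, b, c, hca, hab, h₂⟩)
      · exact ((hab.trans_le hbm).ne (cons.inj hr).1).elim
    · obtain ⟨rfl, rfl⟩ := hsplit
      exact .inr (.inr ⟨a, by simpa using h₁, c, hcB (h₂.subset (by simp)), hca⟩)
    · obtain ⟨rfl, rfl, rfl⟩ := hsplit
      exact .inr (.inr ⟨a, h₁.subset (by simp), c, hcB (h₂.subset (by simp)), hca⟩)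
    · obtain ⟨rfl, rfl, rfl, rfl⟩ := hsplit
      exact .inl ⟨a, b, c, hca, hab, h₁⟩
  · rintro (h | h | ⟨a, ha, c, hc, hca⟩)
    · exact h.mono (sublist_append_left A _)
    · exact h.mono ((sublist_cons_self m B).trans (sublist_append_right A _))
    · have ham : a < m := lt_of_le_of_ne (hmax a (by simp [ha])) (ne_of_mem_of_not_mem ha hmA)
      have hsub := (singleton_sublist.mpr ha).append ((singleton_sublist.mpr hc).cons_cons m)
      exact ⟨a, m, c, hca, ham, by simpa using hsub⟩

theorem pairwise_le_S_iff (l : List α) : (S l).Pairwise (· ≤ ·) ↔ ¬ Contains231 l := by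
  induction l using max_induction with
  | nil => simp [S_nil, Contains231]
  | append_cons A m B hmA hmax ihA ihB =>
    rw [S_append_cons hmA hmax, contains231_append_cons hmA hmax, append_assoc, pairwise_append,
      pairwise_append, ihA, ihB]
    simp only [(S_perm _).mem_iff, mem_append, mem_singleton]
    grind

end Stacksort

section Standardization

def rank (l : List ℕ) (a : ℕ) : ℕ := (l.filter (· ≤ a)).length

theorem stand_eq_map_rank (l : List ℕ) : stand l = l.map (rank l) := rfl

theorem filter_le_sublist_filter_le (l : List ℕ) {a b : ℕ} (hab : a ≤ b) :
    l.filter (· ≤ a) <+ l.filter (· ≤ b) :=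
  monotone_filter_right l fun x hx => by simp only [decide_eq_true_eq] at hx ⊢; omega

theorem rank_mono (l : List ℕ) : Monotone (rank l) := fun _ _ hab =>
  (filter_le_sublist_filter_le l hab).length_le

theorem rank_strictMonoOn (l : List ℕ) : StrictMonoOn (rank l) {a | a ∈ l} := by
  intro a _ b hb hab
  refine (rank_mono l hab.le).lt_of_ne fun heq => ?_
  have hbfilter : b ∈ l.filter (· ≤ b) := mem_filter.mpr ⟨hb, by simp⟩
  rw [← ((filter_le_sublist_filter_le l hab.le).length_eq).mp heq] at hbfilter
  simp only [mem_filter, decide_eq_true_eq] at hbfilter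
  omega

theorem rank_eq_of_perm {l l' : List ℕ} (h : l ~ l') : rank l = rank l' :=
  funext fun _ => (h.filter _).length_eq

theorem stand_perm_idPerm {l : List ℕ} (hl : l.Nodup) : stand l ~ idPerm l.length := by
  have hnd : (stand l).Nodup := hl.map_on fun a ha b hb => (rank_strictMonoOn l).injOn ha hb
  have hsub : stand l ⊆ idPerm l.length := by
    intro x hx
    rw [stand_eq_map_rank] at hx
    obtain ⟨a, ha, rfl⟩ := mem_map.mp hx
    have hpos : 0 < rank l a := length_pos_of_mem (mem_filter.mpr ⟨ha, by simp⟩)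
    have hle : rank l a ≤ l.length := length_filter_le _ _
    simp only [idPerm, mem_range'_1]
    omega
  exact (subperm_of_subset hnd hsub).perm_of_length_le (by simp [idPerm, stand])

theorem S_stand (l : List ℕ) : S (stand l) = stand (S l) := by
  rw [stand_eq_map_rank, stand_eq_map_rank, rank_eq_of_perm (S_perm l)]
  exact S_map l (rank_strictMonoOn l)

theorem is2SS_stand {l : List ℕ} (hl : l.Nodup) (h : ¬ Contains231 (S l)) : Is2SS (stand l) := by
  have hSS : S (S l) ~ l := (S_perm _).trans (S_perm l)
  have hsorted : (S (S l)).Pairwise (· ≤ ·) := (pairwise_le_S_iff _).mpr h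
  refine ⟨by simpa [IsPermOf, stand] using stand_perm_idPerm hl, ?_⟩
  rw [S_stand, S_stand]
  refine Perm.eq_of_pairwise' (hsorted.map _ fun _ _ => (rank_mono _ ·)) (pairwise_le_range' 1) ?_
  simpa [hSS.length_eq, stand] using stand_perm_idPerm (hSS.nodup_iff.mpr hl)

end Standardization

theorem D_cons_spec (x : ℕ) (t : List ℕ) : ∃ A B, x :: t = A ++ t.foldr max x :: B ∧
    t.foldr max x ∉ A ∧ D (x :: t) = (stand A, stand B) :=
  ⟨_, _, (takeWhile_append_cons_tail_dropWhile (foldr_max_mem x t)).symm,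
    notMem_takeWhile_ne _ _, rfl⟩

theorem D_valid_general (π : List ℕ) (h : Is2SS π) :
    ((D π).1 = [] ∨ Is2SS (D π).1) ∧ ((D π).2 = [] ∨ Is2SS (D π).2) := by
  obtain ⟨hperm, hsorted⟩ := h
  have hnd : π.Nodup := hperm.nodup_iff.mpr nodup_range'
  have h231 : ¬ Contains231 (S π) := (pairwise_le_S_iff _).mp (hsorted ▸ pairwise_le_range' 1)
  rcases π with _ | ⟨x, t⟩
  · simp [D]
  obtain ⟨A, B, hsplit, hmA, hD⟩ := D_cons_spec x t
  rw [hsplit] at hnd h231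
  rw [S_append_cons hmA (hsplit ▸ le_foldr_max x t)] at h231
  obtain ⟨hndA, hndB, -⟩ := nodup_append.mp hnd
  have h231AB : ¬ Contains231 (S A ++ S B) := fun h => h231 (h.mono (sublist_append_left _ _))
  rw [hD]
  exact ⟨.inr (is2SS_stand hndA fun h => h231AB (h.mono (sublist_append_left _ _))),
    .inr (is2SS_stand hndB.of_cons fun h => h231AB (h.mono (sublist_append_right _ _)))⟩

/-- If `π` is a two-stack sortable permutation of length `n ≥ 1` and
`D(π) = (π1, π2)`, then each of `π1`, `π2` is either empty or two-stack sortable. -/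
theorem D_valid (n : ℕ) (hn : 1 ≤ n) (π : List ℕ) (hlen : π.length = n)
    (h : Is2SS π) :
    ((D π).1 = [] ∨ Is2SS (D π).1) ∧ ((D π).2 = [] ∨ Is2SS (D π).2) :=
  D_valid_general π h

end TSP
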